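/- arXiv:1811.01894 — 2 statements merged into one kernel-verified Lean document; each statement's English description precedes it below -/
import Mathlib

section
/- For s, t > 0 and r ≥ 2√(st), the supremum over λ > 0 and z > 0 of {λr - t(λ²/2 + zλ) - s·log((z+λ)/z)} equals r√(r²-4st)/(2t) + s·log((r-√(r²-4st))/(r+√(r²-4st))). -/
/-!
Writing `φ x = r x - t x² / 2 - s log x`, the objective is `φ (z + λ) - φ z`. With `a ≤ b` the
roots of `t x² - r x + s` (real because `r ≥ 2 √(s t)`), `φ' x = t (x - a) (b - x) / x`, so `φ`
decreases on `(0, a]`, increases on `[a, b]` and decreases on `[b, ∞)`. Hence an increment of `φ`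
over `[z, z + λ]` is at most `φ b - φ a`, and by continuity the increments over `[a, y]` tend to
it as `y ↓ b`.
-/

open Real Set

namespace RateFunction

noncomputable def phi (s t r x : ℝ) : ℝ := r * x - t * x ^ 2 / 2 - s * log x

lemma hasDerivAt_phi (s t r : ℝ) {x : ℝ} (hx : x ≠ 0) :
    HasDerivAt (phi s t r) (r - t * x - s / x) x := by
  have h := (((hasDerivAt_id' x).const_mul r).sub
    (((hasDerivAt_pow 2 x).const_mul t).div_const 2)).sub ((hasDerivAt_log hx).const_mul s)
  refine h.congr_deriv ?_
  norm_num
  field_simp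

lemma objective_eq_phi_sub_phi (s t r : ℝ) {lam z : ℝ} (hlam : 0 < lam) (hz : 0 < z) :
    lam * r - t * (lam ^ 2 / 2 + z * lam) - s * log ((z + lam) / z) =
      phi s t r (z + lam) - phi s t r z := by
  rw [log_div (by positivity) hz.ne']
  simp only [phi]
  ring

lemma sub_le_sub_of_antitoneOn_monotoneOn_antitoneOn {f : ℝ → ℝ} {a b : ℝ} (hab : a ≤ b)
    (h₁ : AntitoneOn f (Ioc 0 a)) (h₂ : MonotoneOn f (Icc a b)) (h₃ : AntitoneOn f (Ici b))
    {x y : ℝ} (hx : 0 < x) (hxy : x ≤ y) : f y - f x ≤ f b - f a := by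
  have hfab : f a ≤ f b := h₂ (left_mem_Icc.2 hab) (right_mem_Icc.2 hab) hab
  rcases le_or_gt y a with hya | hay
  · have := h₁ ⟨hx, hxy.trans hya⟩ ⟨hx.trans_le hxy, hya⟩ hxy
    linarith
  rcases le_or_gt b x with hbx | hxb
  · have := h₃ hbx (hbx.trans hxy) hxy
    linarith
  have hyb : f y ≤ f b := by
    rcases le_total y b with hyb | hby
    · exact h₂ ⟨hay.le, hyb⟩ (right_mem_Icc.2 hab) hyb
    · exact h₃ self_mem_Ici hby hby
  have hax : f a ≤ f x := by
    rcases le_total a x with hax | hxa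
    · exact h₂ (left_mem_Icc.2 hab) ⟨hax, hxb.le⟩ hax
    · exact h₁ ⟨hx, hxa⟩ ⟨hx.trans_le hxa, le_rfl⟩ hxa
  linarith

lemma exists_roots {s t r : ℝ} (hs : 0 < s) (ht : 0 < t) (hr : 2 * √(s * t) ≤ r) :
    ∃ a b : ℝ, 0 < a ∧ a ≤ b ∧ s = t * a * b ∧ r = t * (a + b) := by
  have hr0 : 0 < r := lt_of_lt_of_le (by positivity) hr
  have hdisc : 0 ≤ r ^ 2 - 4 * s * t := by
    nlinarith [sq_sqrt (mul_pos hs ht).le, sqrt_nonneg (s * t)]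
  set q := √(r ^ 2 - 4 * s * t)
  have hq2 : q ^ 2 = r ^ 2 - 4 * s * t := sq_sqrt hdisc
  have hq0 : 0 ≤ q := sqrt_nonneg _
  have hqr : q < r := by nlinarith [mul_pos hs ht]
  refine ⟨(r - q) / (2 * t), (r + q) / (2 * t), div_pos (by linarith) (by positivity),
    by gcongr; linarith, ?_, ?_⟩
  · field_simp
    linear_combination hq2
  · field_simp
    ring

lemma hasDerivAt_phi_roots (t a b : ℝ) {x : ℝ} (hx : x ≠ 0) :
    HasDerivAt (phi (t * a * b) t (t * (a + b))) (t * (x - a) * (b - x) / x) x := by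
  convert hasDerivAt_phi (t * a * b) t (t * (a + b)) hx using 1
  field_simp
  ring

section Roots

variable {t a b : ℝ}

lemma antitoneOn_phi_roots (ht : 0 ≤ t) {D : Set ℝ} (hD : Convex ℝ D) (hD0 : D ⊆ Ioi 0)
    (hsign : ∀ x ∈ interior D, (x - a) * (b - x) ≤ 0) :
    AntitoneOn (phi (t * a * b) t (t * (a + b))) D := by
  have hint0 : ∀ x ∈ interior D, 0 < x := fun x hx => hD0 (interior_subset hx)
  refine antitoneOn_of_hasDerivWithinAt_nonpos hD
    (fun x hx => (hasDerivAt_phi_roots t a b (hD0 hx).ne').continuousAt.continuousWithinAt)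
    (fun x hx => (hasDerivAt_phi_roots t a b (hint0 x hx).ne').hasDerivWithinAt)
    (fun x hx => div_nonpos_of_nonpos_of_nonneg ?_ (hint0 x hx).le)
  rw [mul_assoc]
  exact mul_nonpos_of_nonneg_of_nonpos ht (hsign x hx)

lemma monotoneOn_phi_roots (ht : 0 ≤ t) {D : Set ℝ} (hD : Convex ℝ D) (hD0 : D ⊆ Ioi 0)
    (hsign : ∀ x ∈ interior D, 0 ≤ (x - a) * (b - x)) :
    MonotoneOn (phi (t * a * b) t (t * (a + b))) D := by
  have hint0 : ∀ x ∈ interior D, 0 < x := fun x hx => hD0 (interior_subset hx)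
  refine monotoneOn_of_hasDerivWithinAt_nonneg hD
    (fun x hx => (hasDerivAt_phi_roots t a b (hD0 hx).ne').continuousAt.continuousWithinAt)
    (fun x hx => (hasDerivAt_phi_roots t a b (hint0 x hx).ne').hasDerivWithinAt)
    (fun x hx => div_nonneg ?_ (hint0 x hx).le)
  rw [mul_assoc]
  exact mul_nonneg ht (hsign x hx)

lemma phi_sub_phi_le_roots (ht : 0 ≤ t) (ha : 0 < a) (hab : a ≤ b) {x y : ℝ} (hx : 0 < x)
    (hxy : x ≤ y) :
    phi (t * a * b) t (t * (a + b)) y - phi (t * a * b) t (t * (a + b)) x ≤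
      phi (t * a * b) t (t * (a + b)) b - phi (t * a * b) t (t * (a + b)) a := by
  refine sub_le_sub_of_antitoneOn_monotoneOn_antitoneOn hab
    (antitoneOn_phi_roots ht (convex_Ioc 0 a) (fun x hx => hx.1) ?_)
    (monotoneOn_phi_roots ht (convex_Icc a b) (fun x hx => ha.trans_le hx.1) ?_)
    (antitoneOn_phi_roots ht (convex_Ici b) (fun x hx => (ha.trans_le hab).trans_le hx) ?_) hx hxy
  · rw [interior_Ioc]
    exact fun x hx => mul_nonpos_of_nonpos_of_nonneg (by linarith [hx.2]) (by linarith [hx.2])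
  · rw [interior_Icc]
    exact fun x hx => mul_nonneg (by linarith [hx.1]) (by linarith [hx.2])
  · rw [interior_Ici]
    exact fun x hx => mul_nonpos_of_nonneg_of_nonpos (by linarith [mem_Ioi.1 hx])
      (by linarith [mem_Ioi.1 hx])

lemma isLUB_objective_roots (ht : 0 ≤ t) (ha : 0 < a) (hab : a ≤ b) :
    IsLUB {y : ℝ | ∃ lam > 0, ∃ z > 0,
        y = lam * (t * (a + b)) - t * (lam ^ 2 / 2 + z * lam) - t * a * b * log ((z + lam) / z)}
      (phi (t * a * b) t (t * (a + b)) b - phi (t * a * b) t (t * (a + b)) a) := by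
  refine isLUB_of_mem_closure ?_ ?_
  · rintro _ ⟨lam, hlam, z, hz, rfl⟩
    rw [objective_eq_phi_sub_phi _ _ _ hlam hz]
    exact phi_sub_phi_le_roots ht ha hab hz (by linarith)
  · have hcont : ContinuousWithinAt (fun y => phi (t * a * b) t (t * (a + b)) y -
        phi (t * a * b) t (t * (a + b)) a) (Ioi a) b :=
      ((hasDerivAt_phi_roots t a b (ha.trans_le hab).ne').continuousAt.sub
        continuousAt_const).continuousWithinAt
    refine hcont.mem_closure (by rwa [closure_Ioi]) fun y hy => ?_
    refine ⟨y - a, sub_pos.2 hy, a, ha, ?_⟩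
    rw [objective_eq_phi_sub_phi _ _ _ (sub_pos.2 hy) ha, add_sub_cancel]

lemma phi_sub_phi_roots (ha : 0 < a) (hb : 0 < b) :
    phi (t * a * b) t (t * (a + b)) b - phi (t * a * b) t (t * (a + b)) a =
      t * (b ^ 2 - a ^ 2) / 2 + t * a * b * log (a / b) := by
  rw [log_div ha.ne' hb.ne']
  simp only [phi]
  ring

end Roots

end RateFunction

open RateFunction in
theorem rate_function_legendre_transform_closed_form (s t r : ℝ) (hs : 0 < s) (ht : 0 < t)
    (hr : 2 * Real.sqrt (s * t) ≤ r) :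
    sSup {y : ℝ | ∃ lam > 0, ∃ z > 0,
        y = lam * r - t * (lam ^ 2 / 2 + z * lam) - s * Real.log ((z + lam) / z)} =
      r * Real.sqrt (r ^ 2 - 4 * s * t) / (2 * t) +
        s * Real.log ((r - Real.sqrt (r ^ 2 - 4 * s * t)) /
          (r + Real.sqrt (r ^ 2 - 4 * s * t))) := by
  obtain ⟨a, b, ha, hab, rfl, rfl⟩ := exists_roots hs ht hr
  have hb : 0 < b := ha.trans_le hab
  have hsqrt : √((t * (a + b)) ^ 2 - 4 * (t * a * b) * t) = t * (b - a) := by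
    rw [show (t * (a + b)) ^ 2 - 4 * (t * a * b) * t = (t * (b - a)) ^ 2 by ring]
    exact sqrt_sq (mul_nonneg ht.le (sub_nonneg.2 hab))
  rw [hsqrt, (isLUB_objective_roots ht.le ha hab).csSup_eq ⟨_, 1, one_pos, 1, one_pos, rfl⟩,
    phi_sub_phi_roots ha hb]
  have hratio : (t * (a + b) - t * (b - a)) / (t * (a + b) + t * (b - a)) = a / b := by
    rw [show t * (a + b) - t * (b - a) = 2 * t * a by ring,
      show t * (a + b) + t * (b - a) = 2 * t * b by ring, mul_div_mul_left _ _ (by positivity)]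
  rw [hratio]
  field_simp
  ring
end

section
/- For μ > 0, λ ∈ (0, μ), and s, t > 0: the maximum of {t(λ²/2 + μλ) + s·log((μ+λ)/μ)} and {t(−λ²/2 + μλ) + s·log(μ/(μ−λ))} equals max( sup_{0≤r≤t} {r(λμ + λ²/2) + Λ_{s,t−r}(λ)}, sup_{0≤u≤s} {u·log(μ/(μ−λ)) + Λ_{s−u,t}(λ)} ), where Λ_{s,u}(λ) = ∫₀^λ √(4su + (ux)²) dx for s, u > 0, Λ_{s,0}(λ) = 0, Λ_{0,u}(λ) = λ²u/2. -/
/-- The point-to-point Lyapunov exponent `Λ_{s,u}(λ)` of Brownian directed percolation in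
closed integral form; this agrees with the continuous boundary extensions `Λ_{s,0}(λ) = 0`
and `Λ_{0,u}(λ) = λ²u/2`. -/
noncomputable def Lam (s u lam : ℝ) : ℝ :=
  ∫ x in (0:ℝ)..lam, Real.sqrt (4 * s * u + (u * x) ^ 2)

/-!
For fixed `x` the integrand `√(4su + u²x²) = √(u · (4s + ux²))` is a geometric mean of two
linear forms in `(s, u)`, so `(s, u) ↦ Λ_{s,u}(λ)` is concave and positively homogeneous and
lies below each of its tangent planes through the origin. By AM–GM the tangent plane along the
ray `s = m(m+λ)u` integrates to `s log((m+λ)/m) + u(λm + λ²/2)`. For `m = μ` and `m = μ - λ`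
this bounds every objective in the two suprema by the first, resp. second, term on the left,
with equality where the free variable puts `(s, t - r)`, resp. `(s - u, t)`, on the ray. If no
such point lies in range, `λ²/μ² ≤ log(μ²/(μ² - λ²)) ≤ λ²/(μ² - λ²)` shows that the term on the
left which is not attained is dominated by the other one.
-/

open Real intervalIntegral

/-- The tangent plane of `(s, u) ↦ √(4su + u²x²)` along the ray `4s = cu`. -/
noncomputable def tangentIntegrand (c s u x : ℝ) : ℝ :=
  (4 * s + u * (c + 2 * x ^ 2)) / (2 * √(c + x ^ 2))

section TangentIntegrand

variable {c : ℝ}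

lemma sqrt_add_sq_pos (hc : 0 < c) (x : ℝ) : 0 < √(c + x ^ 2) :=
  sqrt_pos.2 (by positivity)

lemma sq_sqrt_add_sq (hc : 0 < c) (x : ℝ) : √(c + x ^ 2) ^ 2 = c + x ^ 2 :=
  sq_sqrt (by positivity)

lemma abs_lt_sqrt_add_sq (hc : 0 < c) (x : ℝ) : |x| < √(c + x ^ 2) := by
  rw [← sqrt_sq_eq_abs]
  exact sqrt_lt_sqrt (sq_nonneg x) (by linarith)

lemma hasDerivAt_integral_tangentIntegrand (hc : 0 < c) (s u x : ℝ) :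
    HasDerivAt (fun y ↦ 2 * s * log (y + √(c + y ^ 2)) + u * (y * √(c + y ^ 2)) / 2)
      (tangentIntegrand c s u x) x := by
  have hsum : 0 < x + √(c + x ^ 2) := by
    linarith [neg_abs_le x, abs_lt_sqrt_add_sq hc x]
  have hsqrt : HasDerivAt (fun y ↦ √(c + y ^ 2)) (2 * x / (2 * √(c + x ^ 2))) x := by
    simpa using ((hasDerivAt_pow 2 x).const_add c).sqrt (by positivity)
  have hlog := ((hasDerivAt_id x).add hsqrt).log hsum.ne'
  have hmul := (hasDerivAt_id x).mul hsqrt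
  refine ((hlog.const_mul (2 * s)).add ((hmul.const_mul u).div_const 2)).congr_deriv ?_
  simp only [tangentIntegrand, id, Pi.add_apply]
  field_simp
  linear_combination (x + √(c + x ^ 2)) * u * sq_sqrt_add_sq hc x

lemma continuous_tangentIntegrand (hc : 0 < c) (s u : ℝ) :
    Continuous (tangentIntegrand c s u) :=
  Continuous.div (by fun_prop) (by fun_prop) fun x ↦ by positivity [sqrt_add_sq_pos hc x]

lemma integral_tangentIntegrand (hc : 0 < c) (s u lam : ℝ) :
    ∫ x in (0:ℝ)..lam, tangentIntegrand c s u x =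
      2 * s * (log (lam + √(c + lam ^ 2)) - log √c) + u * (lam * √(c + lam ^ 2)) / 2 := by
  rw [integral_eq_sub_of_hasDerivAt (fun x _ ↦ hasDerivAt_integral_tangentIntegrand hc s u x)
    ((continuous_tangentIntegrand hc s u).intervalIntegrable 0 lam)]
  simp only [zero_pow two_ne_zero, add_zero, zero_add, zero_mul, mul_zero, zero_div]
  ring

/-- AM–GM: `√(u (4s + ux²)) ≤ (αu + (4s + ux²)/α) / 2` with `α = √(c + x²)`. -/
lemma sqrt_le_tangentIntegrand (hc : 0 < c) {s u : ℝ} (hs : 0 ≤ s) (hu : 0 ≤ u) (x : ℝ) :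
    √(4 * s * u + (u * x) ^ 2) ≤ tangentIntegrand c s u x := by
  have hS := sqrt_add_sq_pos hc x
  rw [tangentIntegrand, sqrt_le_left (by positivity), div_pow, le_div_iff₀ (by positivity)]
  nlinarith [sq_nonneg (4 * s - u * c), sq_sqrt_add_sq hc x]

lemma sqrt_eq_tangentIntegrand (hc : 0 < c) {s u : ℝ} (hu : 0 ≤ u) (h : 4 * s = c * u)
    (x : ℝ) : √(4 * s * u + (u * x) ^ 2) = tangentIntegrand c s u x := by
  have hS := sqrt_add_sq_pos hc x
  have hsq : 4 * s * u + (u * x) ^ 2 = u ^ 2 * (c + x ^ 2) := by linear_combination u * h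
  rw [tangentIntegrand, hsq, sqrt_mul (sq_nonneg u), sqrt_sq hu, eq_div_iff (by positivity)]
  linear_combination 2 * u * sq_sqrt_add_sq hc x - h

end TangentIntegrand

section SupportingPlane

variable {m lam : ℝ}

lemma integral_tangentIntegrand_four_mul (hm : 0 < m) (hlam : 0 ≤ lam) (s u : ℝ) :
    ∫ x in (0:ℝ)..lam, tangentIntegrand (4 * m * (m + lam)) s u x =
      s * log ((m + lam) / m) + u * (lam * m + lam ^ 2 / 2) := by
  have hml : 0 < m + lam := by linarith
  have hsqrt : √(4 * m * (m + lam) + lam ^ 2) = 2 * m + lam := by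
    rw [show 4 * m * (m + lam) + lam ^ 2 = (2 * m + lam) ^ 2 by ring, sqrt_sq (by positivity)]
  rw [integral_tangentIntegrand (by positivity), hsqrt,
    log_sqrt (by positivity), show lam + (2 * m + lam) = 2 * (m + lam) by ring,
    show (4 : ℝ) = 2 ^ 2 by norm_num, log_mul (by positivity) hml.ne',
    log_mul (by positivity) hml.ne', log_mul (by positivity) hm.ne', log_pow,
    log_div hml.ne' hm.ne']
  push_cast
  ring

theorem Lam_le_supportingPlane (hm : 0 < m) (hlam : 0 ≤ lam) {s u : ℝ} (hs : 0 ≤ s)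
    (hu : 0 ≤ u) : Lam s u lam ≤ s * log ((m + lam) / m) + u * (lam * m + lam ^ 2 / 2) := by
  have hc : 0 < 4 * m * (m + lam) := by positivity
  rw [Lam, ← integral_tangentIntegrand_four_mul hm hlam]
  exact integral_mono_on hlam
    ((by fun_prop : Continuous fun x ↦ √(4 * s * u + (u * x) ^ 2)).intervalIntegrable 0 lam)
    ((continuous_tangentIntegrand hc s u).intervalIntegrable 0 lam)
    fun x _ ↦ sqrt_le_tangentIntegrand hc hs hu x

theorem Lam_eq_supportingPlane (hm : 0 < m) (hlam : 0 ≤ lam) {s u : ℝ} (hu : 0 ≤ u)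
    (h : s = m * (m + lam) * u) :
    Lam s u lam = s * log ((m + lam) / m) + u * (lam * m + lam ^ 2 / 2) := by
  rw [Lam, ← integral_tangentIntegrand_four_mul hm hlam]
  exact integral_congr fun x _ ↦
    sqrt_eq_tangentIntegrand (by positivity) hu (by rw [h]; ring) x

end SupportingPlane

lemma max_eq_max_csSup {α : Type*} [ConditionallyCompleteLinearOrder α] {P Q : Set α}
    {a b : α} (hP : P.Nonempty) (hQ : Q.Nonempty) (ha : a ∈ upperBounds P)
    (hb : b ∈ upperBounds Q) (haP : a ∈ P ∨ a ≤ b ∧ b ∈ Q) (hbQ : b ∈ Q ∨ b ≤ a ∧ a ∈ P) :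
    max a b = max (sSup P) (sSup Q) := by
  have hPa (h : a ∈ P) : a ≤ sSup P := le_csSup ⟨a, ha⟩ h
  have hQb (h : b ∈ Q) : b ≤ sSup Q := le_csSup ⟨b, hb⟩ h
  refine le_antisymm (max_le ?_ ?_) (max_le_max (csSup_le hP ha) (csSup_le hQ hb))
  · rcases haP with haP | ⟨hab, hbQ⟩
    · exact le_max_of_le_left (hPa haP)
    · exact le_max_of_le_right (hab.trans (hQb hbQ))
  · rcases hbQ with hbQ | ⟨hba, haP⟩
    · exact le_max_of_le_right (hQb hbQ)
    · exact le_max_of_le_left (hba.trans (hPa haP))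

lemma log_div_sub_log_div_mem_Icc {μ lam : ℝ} (hμ : 0 < μ) (hlam : |lam| < μ) :
    log (μ / (μ - lam)) - log ((μ + lam) / μ) ∈
      Set.Icc (lam ^ 2 / μ ^ 2) (lam ^ 2 / ((μ + lam) * (μ - lam))) := by
  obtain ⟨hlo, hhi⟩ := abs_lt.1 hlam
  have hp : 0 < μ + lam := by linarith
  have hm : 0 < μ - lam := by linarith
  have hx : 0 < μ ^ 2 / ((μ + lam) * (μ - lam)) := by positivity
  rw [← log_div (by positivity) (by positivity),
    show μ / (μ - lam) / ((μ + lam) / μ) = μ ^ 2 / ((μ + lam) * (μ - lam)) by field_simp]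
  constructor
  · calc lam ^ 2 / μ ^ 2 = 1 - (μ ^ 2 / ((μ + lam) * (μ - lam)))⁻¹ := by field_simp; ring
      _ ≤ _ := one_sub_inv_le_log_of_pos hx
  · calc _ ≤ μ ^ 2 / ((μ + lam) * (μ - lam)) - 1 := log_le_sub_one_of_pos hx
      _ = lam ^ 2 / ((μ + lam) * (μ - lam)) := by field_simp; ring

noncomputable def branchPlus (μ lam s t : ℝ) : ℝ :=
  t * (lam ^ 2 / 2 + μ * lam) + s * log ((μ + lam) / μ)

noncomputable def branchMinus (μ lam s t : ℝ) : ℝ :=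
  t * (-(lam ^ 2) / 2 + μ * lam) + s * log (μ / (μ - lam))

section Branches

variable {μ lam s t : ℝ}

lemma add_Lam_le_branchPlus (hμ : 0 < μ) (hlam : 0 ≤ lam) (hs : 0 ≤ s) {r : ℝ}
    (hr : r ≤ t) : r * (lam * μ + lam ^ 2 / 2) + Lam s (t - r) lam ≤ branchPlus μ lam s t := by
  unfold branchPlus
  linear_combination Lam_le_supportingPlane hμ hlam hs (sub_nonneg.2 hr)

lemma add_Lam_le_branchMinus (hlam : 0 ≤ lam) (hlt : lam < μ) (ht : 0 ≤ t) {u : ℝ}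
    (hu : u ≤ s) : u * log (μ / (μ - lam)) + Lam (s - u) t lam ≤ branchMinus μ lam s t := by
  have h := Lam_le_supportingPlane (sub_pos.2 hlt) hlam (sub_nonneg.2 hu) ht
  rw [sub_add_cancel] at h
  unfold branchMinus
  linear_combination h

lemma exists_branchPlus_eq (hμ : 0 < μ) (hlam : 0 ≤ lam) (hs : 0 ≤ s)
    (h : s ≤ t * (μ * (μ + lam))) : ∃ r ∈ Set.Icc 0 t,
      branchPlus μ lam s t = r * (lam * μ + lam ^ 2 / 2) + Lam s (t - r) lam := by
  have hv : 0 ≤ s / (μ * (μ + lam)) := by positivity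
  refine ⟨t - s / (μ * (μ + lam)), ⟨?_, sub_le_self _ hv⟩, ?_⟩
  · rwa [sub_nonneg, div_le_iff₀ (by positivity)]
  · rw [sub_sub_cancel, Lam_eq_supportingPlane hμ hlam hv (by field_simp), branchPlus]
    ring

lemma exists_branchMinus_eq (hμ : 0 < μ) (hlam : 0 ≤ lam) (hlt : lam < μ) (ht : 0 ≤ t)
    (h : t * (μ * (μ - lam)) ≤ s) : ∃ u ∈ Set.Icc 0 s,
      branchMinus μ lam s t = u * log (μ / (μ - lam)) + Lam (s - u) t lam := by
  have hm : 0 < μ - lam := sub_pos.2 hlt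
  refine ⟨s - t * (μ * (μ - lam)), ⟨sub_nonneg.2 h, sub_le_self _ (by positivity)⟩, ?_⟩
  rw [sub_sub_cancel, Lam_eq_supportingPlane hm hlam ht (by ring), sub_add_cancel, branchMinus]
  ring

lemma branchPlus_le_branchMinus (hμ : 0 < μ) (hlam : 0 ≤ lam) (hlt : lam < μ) (ht : 0 ≤ t)
    (h : t * (μ * (μ + lam)) ≤ s) : branchPlus μ lam s t ≤ branchMinus μ lam s t := by
  have hgap := (log_div_sub_log_div_mem_Icc hμ (abs_lt.2 ⟨by linarith, hlt⟩)).1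
  have hs : 0 ≤ s := le_trans (by positivity) h
  have key : t * lam ^ 2 ≤ s * (log (μ / (μ - lam)) - log ((μ + lam) / μ)) :=
    calc t * lam ^ 2 ≤ s * (lam ^ 2 / μ ^ 2) := by
          rw [mul_div_assoc', le_div_iff₀ (by positivity)]
          nlinarith [mul_le_mul_of_nonneg_right h (sq_nonneg lam),
            mul_nonneg (mul_nonneg ht hμ.le) (pow_nonneg hlam 3)]
      _ ≤ _ := mul_le_mul_of_nonneg_left hgap hs
  unfold branchPlus branchMinus
  linear_combination key

lemma branchMinus_le_branchPlus (hμ : 0 < μ) (hlam : 0 ≤ lam) (hlt : lam < μ) (hs : 0 ≤ s)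
    (h : s ≤ t * (μ * (μ - lam))) : branchMinus μ lam s t ≤ branchPlus μ lam s t := by
  have hgap := (log_div_sub_log_div_mem_Icc hμ (abs_lt.2 ⟨by linarith, hlt⟩)).2
  have hp : 0 < μ + lam := by linarith
  have hm : 0 < μ - lam := by linarith
  have ht : 0 ≤ t := nonneg_of_mul_nonneg_left (hs.trans h) (by positivity)
  have key : s * (log (μ / (μ - lam)) - log ((μ + lam) / μ)) ≤ t * lam ^ 2 :=
    calc _ ≤ s * (lam ^ 2 / ((μ + lam) * (μ - lam))) := mul_le_mul_of_nonneg_left hgap hs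
      _ ≤ t * lam ^ 2 := by
          rw [mul_div_assoc', div_le_iff₀ (by positivity)]
          nlinarith [mul_le_mul_of_nonneg_right h (sq_nonneg lam),
            mul_nonneg (mul_nonneg ht hm.le) (pow_nonneg hlam 3)]
  unfold branchPlus branchMinus
  linear_combination key

end Branches

theorem stationary_lyapunov_variational_identity (μ lam s t : ℝ) (hμ : 0 < μ)
    (hlam : 0 < lam) (hlt : lam < μ) (hs : 0 < s) (ht : 0 < t) :
    max (t * (lam ^ 2 / 2 + μ * lam) + s * Real.log ((μ + lam) / μ))
        (t * (-(lam ^ 2) / 2 + μ * lam) + s * Real.log (μ / (μ - lam))) =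
      max
        (sSup {y : ℝ | ∃ r ∈ Set.Icc (0:ℝ) t,
          y = r * (lam * μ + lam ^ 2 / 2) + Lam s (t - r) lam})
        (sSup {y : ℝ | ∃ u ∈ Set.Icc (0:ℝ) s,
          y = u * Real.log (μ / (μ - lam)) + Lam (s - u) t lam}) := by
  change max (branchPlus μ lam s t) (branchMinus μ lam s t) = _
  refine max_eq_max_csSup ⟨_, 0, ⟨le_rfl, ht.le⟩, rfl⟩ ⟨_, 0, ⟨le_rfl, hs.le⟩, rfl⟩ ?_ ?_ ?_ ?_
  · rintro _ ⟨r, hr, rfl⟩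
    exact add_Lam_le_branchPlus hμ hlam.le hs.le hr.2
  · rintro _ ⟨u, hu, rfl⟩
    exact add_Lam_le_branchMinus hlam.le hlt ht.le hu.2
  · by_cases h : s ≤ t * (μ * (μ + lam))
    · exact .inl (exists_branchPlus_eq hμ hlam.le hs.le h)
    · refine .inr ⟨branchPlus_le_branchMinus hμ hlam.le hlt ht.le (le_of_not_ge h),
        exists_branchMinus_eq hμ hlam.le hlt ht.le (by nlinarith)⟩
  · by_cases h : t * (μ * (μ - lam)) ≤ s
    · exact .inl (exists_branchMinus_eq hμ hlam.le hlt ht.le h)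
    · refine .inr ⟨branchMinus_le_branchPlus hμ hlam.le hlt hs.le (le_of_not_ge h),
        exists_branchPlus_eq hμ hlam.le hs.le (by nlinarith)⟩
end
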